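/- arXiv:math-ph/0506044 — 2 statements merged into one kernel-verified Lean document; each statement's English description precedes it below -/
import Mathlib

section
/- For every real number λ and all smooth functions X, φ, ψ : ℝ → ℝ, the bilinear expression J(φ, ψ) := φ'·ψ' − λ·φ''·ψ satisfies L_X^{λ+2}(J(φ, ψ)) = J(L_X^0 φ, ψ) + J(φ, L_X^λ ψ), where L_X^0 φ = X·φ'. (That is, the second-order bilinear operator F_0 ⊗ F_λ → F_{λ+2}, φ ⊗ ψ ↦ {dφ, ψ}, is invariant under the action of vector fields on tensor densities.) -/
open scoped ContDiff

private lemma sm_deriv' {f : ℝ → ℝ} (hf : ContDiff ℝ ∞ f) : ContDiff ℝ ∞ (deriv f) :=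
  (contDiff_infty_iff_deriv.mp hf).2


/-- Lie derivative of a `lam`-density `φ` along the vector field `X`:
`L_X^lam φ = X·φ' + lam·X'·φ`. -/
noncomputable def lieDeriv (lam : ℝ) (X φ : ℝ → ℝ) : ℝ → ℝ :=
  fun x => X x * deriv φ x + lam * deriv X x * φ x

/-- The second-order bilinear operator `J : F_0 ⊗ F_λ → F_{λ+2}`,
`J(φ,ψ) = φ'·ψ' − λ·φ''·ψ` (i.e. `φ ⊗ ψ ↦ {dφ, ψ}`). -/
noncomputable def Jop (lam : ℝ) (φ ψ : ℝ → ℝ) : ℝ → ℝ :=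
  fun x => deriv φ x * deriv ψ x - lam * iteratedDeriv 2 φ x * ψ x

/-- The second-order bilinear operator `F_0 ⊗ F_λ → F_{λ+2}`, `φ ⊗ ψ ↦ {dφ, ψ}`,
is invariant under the action of vector fields on tensor densities. -/
theorem Jop_invariant (lam : ℝ) (X φ ψ : ℝ → ℝ)
    (hX : ContDiff ℝ (⊤ : ℕ∞) X) (hφ : ContDiff ℝ (⊤ : ℕ∞) φ) (hψ : ContDiff ℝ (⊤ : ℕ∞) ψ) :
    lieDeriv (lam + 2) X (Jop lam φ ψ)
      = fun x => Jop lam (lieDeriv 0 X φ) ψ x + Jop lam φ (lieDeriv lam X ψ) x := by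
  have hX0 : ContDiff ℝ ∞ X := hX.of_le (by simp)
  have hφ0 : ContDiff ℝ ∞ φ := hφ.of_le (by simp)
  have hψ0 : ContDiff ℝ ∞ ψ := hψ.of_le (by simp)
  have hX1 := sm_deriv' hX0
  have hX2 := sm_deriv' hX1
  have hφ1 := sm_deriv' hφ0
  have hφ2 := sm_deriv' hφ1
  have hφ3 := sm_deriv' hφ2
  have hψ1 := sm_deriv' hψ0
  have hψ2 := sm_deriv' hψ1
  have one_le : (1 : WithTop ℕ∞) ≤ ∞ := by exact_mod_cast (le_top : (1:ℕ∞) ≤ ⊤)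
  have dX := hX0.differentiable (by simp)
  have dX1 := hX1.differentiable (by simp)
  have dφ := hφ0.differentiable (by simp)
  have dφ1 := hφ1.differentiable (by simp)
  have dφ2 := hφ2.differentiable (by simp)
  have dψ := hψ0.differentiable (by simp)
  have dψ1 := hψ1.differentiable (by simp)
  have h2 : ∀ f : ℝ → ℝ, iteratedDeriv 2 f = deriv (deriv f) := by
    intro f; rw [iteratedDeriv_succ, iteratedDeriv_one]
  -- deriv of X·φ'
  have E1 : deriv (fun y => X y * deriv φ y)
      = fun y => deriv X y * deriv φ y + X y * deriv (deriv φ) y :=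
    funext fun y => deriv_mul (dX y) (dφ1 y)
  -- second deriv of X·φ'
  have E2 : deriv (fun y => deriv X y * deriv φ y + X y * deriv (deriv φ) y)
      = fun y => (deriv (deriv X) y * deriv φ y + deriv X y * deriv (deriv φ) y)
          + (deriv X y * deriv (deriv φ) y + X y * deriv (deriv (deriv φ)) y) :=
    funext fun y => by
      rw [deriv_fun_add (show DifferentiableAt ℝ (fun y => deriv X y * deriv φ y) y from (dX1 y).mul (dφ1 y)) (show DifferentiableAt ℝ (fun y => X y * deriv (deriv φ) y) y from (dX y).mul (dφ2 y)),
        deriv_fun_mul (dX1 y) (dφ1 y), deriv_fun_mul (dX y) (dφ2 y)]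
  -- deriv of J(φ,ψ)
  have E0 : deriv (fun y => deriv φ y * deriv ψ y - lam * deriv (deriv φ) y * ψ y)
      = fun y => (deriv (deriv φ) y * deriv ψ y + deriv φ y * deriv (deriv ψ) y)
          - (lam * deriv (deriv (deriv φ)) y * ψ y + lam * deriv (deriv φ) y * deriv ψ y) :=
    funext fun y => by
      rw [deriv_fun_sub (show DifferentiableAt ℝ (fun y => deriv φ y * deriv ψ y) y from (dφ1 y).mul (dψ1 y)) (show DifferentiableAt ℝ (fun y => lam * deriv (deriv φ) y * ψ y) y from ((dφ2.const_mul lam) y).mul (dψ y)),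
        deriv_fun_mul (dφ1 y) (dψ1 y), deriv_fun_mul ((dφ2.const_mul lam) y) (dψ y),
        deriv_const_mul lam (dφ2 y)]
  -- deriv of lieDeriv lam X ψ
  have E3 : deriv (fun y => X y * deriv ψ y + lam * deriv X y * ψ y)
      = fun y => (deriv X y * deriv ψ y + X y * deriv (deriv ψ) y)
          + (lam * deriv (deriv X) y * ψ y + lam * deriv X y * deriv ψ y) :=
    funext fun y => by
      rw [deriv_fun_add (show DifferentiableAt ℝ (fun y => X y * deriv ψ y) y from (dX y).mul (dψ1 y)) (show DifferentiableAt ℝ (fun y => lam * deriv X y * ψ y) y from ((dX1.const_mul lam) y).mul (dψ y)),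
        deriv_fun_mul (dX y) (dψ1 y), deriv_fun_mul ((dX1.const_mul lam) y) (dψ y),
        deriv_const_mul lam (dX1 y)]
  have hJ : Jop lam φ ψ = fun y => deriv φ y * deriv ψ y - lam * deriv (deriv φ) y * ψ y := by
    funext y; simp [Jop, h2]
  have hL0 : lieDeriv 0 X φ = fun y => X y * deriv φ y := by
    funext y; simp [lieDeriv]
  have hL : lieDeriv lam X ψ = fun y => X y * deriv ψ y + lam * deriv X y * ψ y := rfl
  funext x
  simp only [lieDeriv, Jop, h2, hJ, hL0, hL, zero_mul, add_zero]
  rw [E0, E1, E2, E3]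
  ring
end

section
/- Let λ, μ ∈ ℝ, let k ≥ 1, and set α := λk + k(k−1)/2 and β := μ − λ − k. Let X, a_0, …, a_k : ℝ → ℝ be smooth, and let b_0, …, b_k : ℝ → ℝ be smooth functions such that Σ_{i=0}^{k} b_i·φ^{(i)} = L_X^μ( Σ_{i=0}^{k} a_i·φ^{(i)} ) − Σ_{i=0}^{k} a_i·(L_X^λ φ)^{(i)} for every smooth φ : ℝ → ℝ. Then α·b_k' + β·b_{k−1} = L_X^{μ−λ−k+1}( α·a_k' + β·a_{k−1} ). (That is, the map V(A) = α·a_k' + β·a_{k−1}, a first-order analogue of the principal symbol with values in densities of weight μ − λ − k + 1, is equivariant under the action of vector fields.) -/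
open Finset

lemma smooth_shift (c : ℝ) : ContDiff ℝ (⊤:ℕ∞) (fun y : ℝ => y - c) :=
  contDiff_id.sub contDiff_const

lemma smooth_deriv {g : ℝ → ℝ} (hg : ContDiff ℝ (⊤:ℕ∞) g) : ContDiff ℝ (⊤:ℕ∞) (deriv g) :=
  (contDiff_infty_iff_deriv.mp hg).2

lemma itd_add' {f g : ℝ → ℝ} (hf : ContDiff ℝ (⊤:ℕ∞) f) (hg : ContDiff ℝ (⊤:ℕ∞) g) (n : ℕ) (x : ℝ) :
    iteratedDeriv n (fun y => f y + g y) x = iteratedDeriv n f x + iteratedDeriv n g x := by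
  simp only [← iteratedDerivWithin_univ]
  exact iteratedDerivWithin_add (Set.mem_univ x) uniqueDiffOn_univ
    ((hf.of_le (by exact_mod_cast le_top)).contDiffWithinAt) ((hg.of_le (by exact_mod_cast le_top)).contDiffWithinAt)

lemma itd_shift (c : ℝ) : ∀ (n : ℕ) (g : ℝ → ℝ), ContDiff ℝ (⊤:ℕ∞) g →
    iteratedDeriv n (fun y => g y * (y - c)) c = n * iteratedDeriv (n - 1) g c
  | 0, g, hg => by simp
  | (n+1), g, hg => by
    rw [iteratedDeriv_succ']
    have hd : deriv (fun y => g y * (y - c)) = fun y => deriv g y * (y - c) + g y := by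
      funext y
      have h1 : HasDerivAt (fun y : ℝ => g y * (y - c))
          (deriv g y * (y - c) + g y * 1) y :=
        ((hg.differentiable (by simp) y).hasDerivAt).mul ((hasDerivAt_id y).sub_const c)
      rw [h1.deriv]; ring
    rw [hd]
    rw [itd_add' ((smooth_deriv hg).mul (smooth_shift c)) hg n c,
      itd_shift c n (deriv g) (smooth_deriv hg)]
    match n with
    | 0 => norm_num
    | (m+1) => {
      rw [show m + 1 - 1 = m from rfl, ← iteratedDeriv_succ',
        show m + 1 + 1 - 1 = m + 1 from rfl]
      push_cast
      ring }

lemma itd_mul_pow (c : ℝ) : ∀ (m : ℕ) (g : ℝ → ℝ), ContDiff ℝ (⊤:ℕ∞) g → ∀ n : ℕ,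
    iteratedDeriv n (fun y => g y * (y - c)^m) c
      = (n.descFactorial m : ℝ) * iteratedDeriv (n - m) g c
  | 0, g, hg, n => by simp
  | (m+1), g, hg, n => by
    have h1 : (fun y => g y * (y - c)^(m+1)) = fun y => (g y * (y - c)) * (y - c)^m := by
      funext y; ring
    rw [h1, itd_mul_pow c m (fun y => g y * (y - c)) (hg.mul (smooth_shift c)) n,
      itd_shift c (n - m) g hg]
    have h2 : n - m - 1 = n - (m+1) := by omega
    rw [h2, Nat.descFactorial_succ]
    push_cast
    ring


lemma itd_cmul' {f : ℝ → ℝ} (hf : ContDiff ℝ (⊤:ℕ∞) f) (r : ℝ) (n : ℕ) (x : ℝ) :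
    iteratedDeriv n (fun y => r * f y) x = r * iteratedDeriv n f x := by
  simp only [← iteratedDerivWithin_univ]
  exact iteratedDerivWithin_const_mul (Set.mem_univ x) uniqueDiffOn_univ r
    ((hf.of_le (by exact_mod_cast le_top)).contDiffWithinAt)

lemma itd_pow (c : ℝ) (j : ℕ) : ∀ i : ℕ,
    iteratedDeriv i (fun y : ℝ => (y - c)^j) = fun y => (j.descFactorial i : ℝ) * (y - c)^(j - i)
  | 0 => by simp
  | (i+1) => by
    rw [iteratedDeriv_succ, itd_pow c j i]
    funext y
    have h1 : HasDerivAt (fun y : ℝ => (y - c)^(j-i)) ((j-i : ℕ) * (y - c)^(j-i-1) * 1) y :=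
      ((hasDerivAt_id y).sub_const c).pow _
    rw [deriv_const_mul _ h1.differentiableAt, h1.deriv]
    rw [show j.descFactorial (i+1) = (j - i) * j.descFactorial i from Nat.descFactorial_succ j i]
    push_cast
    rw [show j - i - 1 = j - (i+1) from by omega]; ring

lemma hasDerivAt_term {g : ℝ → ℝ} (hg : ContDiff ℝ (⊤:ℕ∞) g) (d c x : ℝ) (m : ℕ) :
    HasDerivAt (fun y => g y * (d * (y - c)^m))
      (deriv g x * (d * (x - c)^m) + g x * (d * (((m:ℕ):ℝ) * (x - c)^(m-1)))) x := by
  have h1 : HasDerivAt (fun y : ℝ => d * (y - c)^m) (d * (((m:ℕ):ℝ) * (x - c)^(m-1) * 1)) x :=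
    (((hasDerivAt_id x).sub_const c).pow m).const_mul d
  have h2 := ((hg.differentiable (by simp) x).hasDerivAt).fun_mul h1
  exact h2.congr_deriv (by ring)

lemma desc_succ_self (n : ℕ) : (n+1).descFactorial n = (n+1) * n.factorial := by
  induction n with
  | zero => simp
  | succ m ih =>
    rw [Nat.succ_descFactorial_succ, ih, Nat.factorial_succ]

lemma desc_pred_self (k : ℕ) (hk : 1 ≤ k) : k.descFactorial (k-1) = k.factorial := by
  obtain ⟨n, rfl⟩ : ∃ n, k = n + 1 := ⟨k - 1, by omega⟩
  rw [show n + 1 - 1 = n from rfl, desc_succ_self, ← Nat.factorial_succ]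

lemma bk_formula (lam μ : ℝ) (k : ℕ) (hk : 1 ≤ k) (X : ℝ → ℝ) (a b : ℕ → ℝ → ℝ)
    (hX : ContDiff ℝ (⊤ : ℕ∞) X)
    (ha : ∀ i, ContDiff ℝ (⊤ : ℕ∞) (a i))
    (hb : ∀ φ : ℝ → ℝ, ContDiff ℝ (⊤ : ℕ∞) φ →
      (fun x => ∑ i ∈ Finset.range (k+1), b i x * iteratedDeriv i φ x)
        = fun x =>
            lieDeriv μ X (fun y => ∑ i ∈ Finset.range (k+1), a i y * iteratedDeriv i φ y) x
              - ∑ i ∈ Finset.range (k+1), a i x * iteratedDeriv i (lieDeriv lam X φ) x)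
    (c : ℝ) :
    b k c = X c * deriv (a k) c + (μ - lam - (k:ℝ)) * deriv X c * a k c := by
  have hXs : ContDiff ℝ (⊤:ℕ∞) X := hX.of_le (by simp)
  have has : ∀ i, ContDiff ℝ (⊤:ℕ∞) (a i) := fun i => (ha i).of_le (by simp)
  have hφ : ContDiff ℝ (⊤ : ℕ∞) (fun y : ℝ => (y - c)^k) := (contDiff_id.sub contDiff_const).pow k
  have hkk : k - k = 0 := Nat.sub_self k
  have hk1 : k - (k-1) = 1 := by omega
  have hdesc : k.descFactorial (k-1) = k.factorial := desc_pred_self k hk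
  -- A1
  have A1 : ∑ i ∈ Finset.range (k+1), b i c * iteratedDeriv i (fun y : ℝ => (y - c)^k) c
      = (k.factorial : ℝ) * b k c := by
    rw [Finset.sum_eq_single k]
    · rw [itd_pow, Nat.descFactorial_self]
      simp [hkk]; ring
    · intro i hi hne
      have hlt : i < k := by simp at hi; omega
      rw [itd_pow]
      simp [zero_pow (show k - i ≠ 0 by omega)]
    · intro h; exact absurd (Finset.self_mem_range_succ k) h
  -- A3
  have A3 : ∑ i ∈ Finset.range (k+1), a i c * iteratedDeriv i (fun y : ℝ => (y - c)^k) c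
      = (k.factorial : ℝ) * a k c := by
    rw [Finset.sum_eq_single k]
    · rw [itd_pow, Nat.descFactorial_self]
      simp [hkk]; ring
    · intro i hi hne
      have hlt : i < k := by simp at hi; omega
      rw [itd_pow]
      simp [zero_pow (show k - i ≠ 0 by omega)]
    · intro h; exact absurd (Finset.self_mem_range_succ k) h
  -- A2
  have A2 : deriv (fun y => ∑ i ∈ Finset.range (k+1),
        a i y * iteratedDeriv i (fun y' : ℝ => (y' - c)^k) y) c
      = (k.factorial : ℝ) * deriv (a k) c + (k.factorial : ℝ) * a (k-1) c := by
    have e1 : (fun y => ∑ i ∈ Finset.range (k+1),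
          a i y * iteratedDeriv i (fun y' : ℝ => (y' - c)^k) y)
        = fun y => ∑ i ∈ Finset.range (k+1),
            a i y * ((k.descFactorial i : ℝ) * (y - c)^(k - i)) := by
      funext y; simp only [itd_pow]
    rw [e1, deriv_fun_sum (fun i _ => (hasDerivAt_term (has i) _ c c _).differentiableAt)]
    have e2 : ∀ i ∈ Finset.range (k+1),
        deriv (fun y => a i y * ((k.descFactorial i:ℝ) * (y-c)^(k-i))) c
        = deriv (a i) c * ((k.descFactorial i:ℝ) * (0:ℝ)^(k-i))
          + a i c * ((k.descFactorial i:ℝ) * ((((k-i:ℕ)):ℝ) * (0:ℝ)^(k-i-1))) := by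
      intro i _
      rw [(hasDerivAt_term (has i) _ c c _).deriv, sub_self]
    rw [Finset.sum_congr rfl e2, Finset.sum_range_succ]
    have e3 : ∑ i ∈ Finset.range k,
        (deriv (a i) c * ((k.descFactorial i:ℝ) * (0:ℝ)^(k-i))
          + a i c * ((k.descFactorial i:ℝ) * ((((k-i:ℕ)):ℝ) * (0:ℝ)^(k-i-1))))
        = (k.factorial : ℝ) * a (k-1) c := by
      rw [Finset.sum_eq_single (k-1)]
      · rw [hdesc, hk1]
        norm_num
        ring
      · intro i hi hne
        have hlt : i < k - 1 := by simp at hi; omega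
        simp [zero_pow (show k - i ≠ 0 by omega), zero_pow (show k - i - 1 ≠ 0 by omega)]
      · intro h
        exact absurd (Finset.mem_range.mpr (by omega)) h
    rw [e3, hkk, Nat.descFactorial_self]
    norm_num
    ring
  -- A4
  have hL : lieDeriv lam X (fun y : ℝ => (y - c)^k)
      = fun y => (k:ℝ) * (X y * (y - c)^(k-1)) + lam * (deriv X y * (y - c)^k) := by
    funext y
    have hd : deriv (fun y : ℝ => (y - c)^k) = fun y => (k.descFactorial 1 : ℝ) * (y - c)^(k-1) := by
      rw [← iteratedDeriv_one]; exact itd_pow c k 1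
    simp only [lieDeriv, hd, Nat.descFactorial_one]
    ring
  have hitdL : ∀ i, iteratedDeriv i (lieDeriv lam X (fun y : ℝ => (y - c)^k)) c
      = (k:ℝ) * ((i.descFactorial (k-1) : ℝ) * iteratedDeriv (i - (k-1)) X c)
        + lam * ((i.descFactorial k : ℝ) * iteratedDeriv (i - k) (deriv X) c) := by
    intro i
    rw [hL, itd_add' (contDiff_const.mul (hXs.mul ((smooth_shift c).pow _)))
        (contDiff_const.mul ((smooth_deriv hXs).mul ((smooth_shift c).pow _))) i c,
      itd_cmul' (hXs.mul ((smooth_shift c).pow _)) _ i c,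
      itd_cmul' ((smooth_deriv hXs).mul ((smooth_shift c).pow _)) _ i c,
      itd_mul_pow c (k-1) X hXs i, itd_mul_pow c k (deriv X) (smooth_deriv hXs) i]
  have A4 : ∑ i ∈ Finset.range (k+1),
        a i c * iteratedDeriv i (lieDeriv lam X (fun y : ℝ => (y - c)^k)) c
      = (k.factorial:ℝ) * (a (k-1) c * X c) + (k.factorial:ℝ) * (((k:ℝ) + lam) * a k c * deriv X c) := by
    rw [Finset.sum_congr rfl (fun i _ => by rw [hitdL i]), Finset.sum_range_succ]
    have e3 : ∑ i ∈ Finset.range k,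
        (a i c * ((k:ℝ) * ((i.descFactorial (k-1) : ℝ) * iteratedDeriv (i - (k-1)) X c)
          + lam * ((i.descFactorial k : ℝ) * iteratedDeriv (i - k) (deriv X) c)))
        = (k.factorial:ℝ) * (a (k-1) c * X c) := by
      rw [Finset.sum_eq_single (k-1)]
      · rw [Nat.descFactorial_self, show (k-1) - (k-1) = 0 from Nat.sub_self _,
          show (k-1).descFactorial k = 0 from
            (Nat.descFactorial_eq_zero_iff_lt).mpr (by omega)]
        rw [iteratedDeriv_zero]
        have hkfac : ((k:ℝ)) * (((k-1).factorial:ℝ)) = (k.factorial:ℝ) := by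
          rw [← Nat.cast_mul]
          exact_mod_cast Nat.mul_factorial_pred (by omega)
        push_cast
        linear_combination (a (k-1) c * X c) * hkfac
      · intro i hi hne
        have hlt : i < k - 1 := by simp at hi; omega
        rw [show i.descFactorial (k-1) = 0 from
            (Nat.descFactorial_eq_zero_iff_lt).mpr (by omega),
          show i.descFactorial k = 0 from
            (Nat.descFactorial_eq_zero_iff_lt).mpr (by omega)]
        simp
      · intro h
        exact absurd (Finset.mem_range.mpr (by omega)) h
    rw [e3, hdesc, Nat.descFactorial_self, hk1, hkk]
    rw [iteratedDeriv_one, iteratedDeriv_zero]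
    ring
  have H : (∑ i ∈ Finset.range (k+1), b i c * iteratedDeriv i (fun y : ℝ => (y-c)^k) c)
      = X c * deriv (fun y => ∑ i ∈ Finset.range (k+1),
            a i y * iteratedDeriv i (fun y' : ℝ => (y'-c)^k) y) c
        + μ * deriv X c * (∑ i ∈ Finset.range (k+1),
            a i c * iteratedDeriv i (fun y' : ℝ => (y'-c)^k) c)
        - ∑ i ∈ Finset.range (k+1),
            a i c * iteratedDeriv i (lieDeriv lam X (fun y : ℝ => (y-c)^k)) c :=
    congrFun (hb _ hφ) c
  rw [A1, A2, A3, A4] at H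
  have hne : (k.factorial:ℝ) ≠ 0 := Nat.cast_ne_zero.mpr (Nat.factorial_ne_zero k)
  refine mul_left_cancel₀ hne ?_
  linear_combination H

lemma desc_two (m : ℕ) : (m+2).descFactorial m * 2 = (m+2).factorial := by
  induction m with
  | zero => simp
  | succ n ih =>
    rw [Nat.succ_descFactorial_succ, Nat.mul_assoc, ih]
    simp [Nat.factorial_succ]
    try ring

lemma bk1_formula (lam μ : ℝ) (k : ℕ) (hk : 1 ≤ k) (X : ℝ → ℝ) (a b : ℕ → ℝ → ℝ)
    (hX : ContDiff ℝ (⊤ : ℕ∞) X)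
    (ha : ∀ i, ContDiff ℝ (⊤ : ℕ∞) (a i))
    (hb : ∀ φ : ℝ → ℝ, ContDiff ℝ (⊤ : ℕ∞) φ →
      (fun x => ∑ i ∈ Finset.range (k+1), b i x * iteratedDeriv i φ x)
        = fun x =>
            lieDeriv μ X (fun y => ∑ i ∈ Finset.range (k+1), a i y * iteratedDeriv i φ y) x
              - ∑ i ∈ Finset.range (k+1), a i x * iteratedDeriv i (lieDeriv lam X φ) x)
    (c : ℝ) :
    b (k-1) c = X c * deriv (a (k-1)) c + (μ - lam - (k:ℝ) + 1) * deriv X c * a (k-1) c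
      - (lam * (k:ℝ) + (k:ℝ) * ((k:ℝ) - 1) / 2) * a k c * deriv (deriv X) c := by
  obtain ⟨j, rfl⟩ : ∃ j, k = j + 1 := ⟨k - 1, by omega⟩
  simp only [Nat.add_sub_cancel]
  have hXs : ContDiff ℝ (⊤:ℕ∞) X := hX.of_le (by simp)
  have has : ∀ i, ContDiff ℝ (⊤:ℕ∞) (a i) := fun i => (ha i).of_le (by simp)
  have hφ : ContDiff ℝ (⊤ : ℕ∞) (fun y : ℝ => (y - c)^j) := (contDiff_id.sub contDiff_const).pow j
  have hjj : j - j = 0 := Nat.sub_self j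
  have hdesc1 : (j+1).descFactorial j = (j+1) * j.factorial := desc_succ_self j
  set dd := deriv (deriv X) c with hdd
  -- A1
  have hzero : ∀ f : ℕ → ℝ → ℝ, ∀ i ∈ Finset.range (j+1+1), i ≠ j →
      f i c * iteratedDeriv i (fun y : ℝ => (y - c)^j) c = 0 := by
    intro f i hi hne
    rw [itd_pow]
    rcases lt_or_gt_of_ne hne with h | h
    · simp [zero_pow (show j - i ≠ 0 by omega)]
    · simp [Nat.descFactorial_eq_zero_iff_lt.mpr h]
  have A1 : ∑ i ∈ Finset.range (j+1+1), b i c * iteratedDeriv i (fun y : ℝ => (y - c)^j) c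
      = (j.factorial : ℝ) * b j c := by
    rw [Finset.sum_eq_single j (hzero b)
      (fun h => absurd (Finset.mem_range.mpr (by omega)) h)]
    rw [itd_pow, Nat.descFactorial_self]
    simp [hjj]; ring
  have A3 : ∑ i ∈ Finset.range (j+1+1), a i c * iteratedDeriv i (fun y : ℝ => (y - c)^j) c
      = (j.factorial : ℝ) * a j c := by
    rw [Finset.sum_eq_single j (hzero a)
      (fun h => absurd (Finset.mem_range.mpr (by omega)) h)]
    rw [itd_pow, Nat.descFactorial_self]
    simp [hjj]; ring
  -- A2
  have A2 : deriv (fun y => ∑ i ∈ Finset.range (j+1+1),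
        a i y * iteratedDeriv i (fun y' : ℝ => (y' - c)^j) y) c
      = (j.factorial : ℝ) * deriv (a j) c
        + (j:ℝ) * ((j-1).factorial : ℝ) * a (j-1) c := by
    have e1 : (fun y => ∑ i ∈ Finset.range (j+1+1),
          a i y * iteratedDeriv i (fun y' : ℝ => (y' - c)^j) y)
        = fun y => ∑ i ∈ Finset.range (j+1+1),
            a i y * ((j.descFactorial i : ℝ) * (y - c)^(j - i)) := by
      funext y; simp only [itd_pow]
    rw [e1, deriv_fun_sum (fun i _ => (hasDerivAt_term (has i) _ c c _).differentiableAt)]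
    have e2 : ∀ i ∈ Finset.range (j+1+1),
        deriv (fun y => a i y * ((j.descFactorial i:ℝ) * (y-c)^(j-i))) c
        = deriv (a i) c * ((j.descFactorial i:ℝ) * (0:ℝ)^(j-i))
          + a i c * ((j.descFactorial i:ℝ) * ((((j-i:ℕ)):ℝ) * (0:ℝ)^(j-i-1))) := by
      intro i _
      rw [(hasDerivAt_term (has i) _ c c _).deriv, sub_self]
    rw [Finset.sum_congr rfl e2, Finset.sum_range_succ, Finset.sum_range_succ]
    have e3 : ∑ i ∈ Finset.range j,
        (deriv (a i) c * ((j.descFactorial i:ℝ) * (0:ℝ)^(j-i))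
          + a i c * ((j.descFactorial i:ℝ) * ((((j-i:ℕ)):ℝ) * (0:ℝ)^(j-i-1))))
        = (j:ℝ) * ((j-1).factorial : ℝ) * a (j-1) c := by
      match j with
      | 0 => simp
      | (m+1) =>
        rw [Finset.sum_eq_single m]
        · rw [show m+1-m = 1 from by omega, desc_succ_self m, show m+1-1 = m from rfl]
          push_cast
          norm_num
          try ring
        · intro i hi hne
          have hlt : i < m := by simp at hi; omega
          simp [zero_pow (show m+1-i ≠ 0 by omega), zero_pow (show m+1-i-1 ≠ 0 by omega)]
        · intro h
          exact absurd (Finset.mem_range.mpr (by omega)) h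
    rw [e3, hjj, Nat.descFactorial_self,
      Nat.descFactorial_eq_zero_iff_lt.mpr (by omega : j < j + 1)]
    norm_num
    ring
  -- A4
  have hL : lieDeriv lam X (fun y : ℝ => (y - c)^j)
      = fun y => (j:ℝ) * (X y * (y - c)^(j-1)) + lam * (deriv X y * (y - c)^j) := by
    funext y
    have hd : deriv (fun y : ℝ => (y - c)^j)
        = fun y => (j.descFactorial 1 : ℝ) * (y - c)^(j-1) := by
      rw [← iteratedDeriv_one]; exact itd_pow c j 1
    simp only [lieDeriv, hd, Nat.descFactorial_one]
    ring
  have hitdL : ∀ i, iteratedDeriv i (lieDeriv lam X (fun y : ℝ => (y - c)^j)) c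
      = (j:ℝ) * ((i.descFactorial (j-1) : ℝ) * iteratedDeriv (i - (j-1)) X c)
        + lam * ((i.descFactorial j : ℝ) * iteratedDeriv (i - j) (deriv X) c) := by
    intro i
    rw [hL, itd_add' (contDiff_const.mul (hXs.mul ((smooth_shift c).pow _)))
        (contDiff_const.mul ((smooth_deriv hXs).mul ((smooth_shift c).pow _))) i c,
      itd_cmul' (hXs.mul ((smooth_shift c).pow _)) _ i c,
      itd_cmul' ((smooth_deriv hXs).mul ((smooth_shift c).pow _)) _ i c,
      itd_mul_pow c (j-1) X hXs i, itd_mul_pow c j (deriv X) (smooth_deriv hXs) i]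
  have A4 : ∑ i ∈ Finset.range (j+1+1),
        a i c * iteratedDeriv i (lieDeriv lam X (fun y : ℝ => (y - c)^j)) c
      = (j:ℝ) * ((j-1).factorial : ℝ) * (a (j-1) c * X c)
        + (j.factorial:ℝ) * ((j:ℝ) + lam) * a j c * deriv X c
        + (j.factorial:ℝ) * (lam * ((j:ℝ)+1) + ((j:ℝ)+1)*(j:ℝ)/2) * a (j+1) c * dd := by
    rw [Finset.sum_congr rfl (fun i _ => by rw [hitdL i]), Finset.sum_range_succ,
      Finset.sum_range_succ]
    -- top term i = j+1
    have etop : a (j+1) c * ((j:ℝ) * (((j+1).descFactorial (j-1) : ℝ)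
          * iteratedDeriv (j+1 - (j-1)) X c)
        + lam * (((j+1).descFactorial j : ℝ) * iteratedDeriv (j+1-j) (deriv X) c))
        = (j.factorial:ℝ) * (lam * ((j:ℝ)+1) + ((j:ℝ)+1)*(j:ℝ)/2) * a (j+1) c * dd := by
      rw [show j+1-j = 1 from by omega, iteratedDeriv_one, hdesc1]
      match j with
      | 0 =>
        simp [hdd]
        try ring
      | (m+1) =>
        rw [show m+1+1 - (m+1-1) = 2 from by omega,
          show iteratedDeriv 2 X c = dd from by
            rw [hdd, iteratedDeriv_succ, iteratedDeriv_one]]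
        have h2 : ((m+2).descFactorial m * 2 : ℝ) = ((m+2).factorial : ℝ) := by
          exact_mod_cast congrArg (Nat.cast (R := ℝ)) (desc_two m)
        push_cast [Nat.factorial_succ] at h2 ⊢
        linear_combination (a (m+2) c * dd * ((m:ℝ)+1) / 2) * h2
    -- term i = j
    have emid : a j c * ((j:ℝ) * ((j.descFactorial (j-1) : ℝ)
          * iteratedDeriv (j - (j-1)) X c)
        + lam * ((j.descFactorial j : ℝ) * iteratedDeriv (j-j) (deriv X) c))
        = (j.factorial:ℝ) * ((j:ℝ) + lam) * a j c * deriv X c := by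
      rw [hjj, iteratedDeriv_zero, Nat.descFactorial_self]
      match j with
      | 0 =>
        norm_num
        try ring
      | (m+1) =>
        rw [show m+1 - (m+1-1) = 1 from by omega, iteratedDeriv_one,
          desc_pred_self (m+1) (by omega)]
        ring
    have e3 : ∑ i ∈ Finset.range j,
        (a i c * ((j:ℝ) * ((i.descFactorial (j-1) : ℝ) * iteratedDeriv (i - (j-1)) X c)
          + lam * ((i.descFactorial j : ℝ) * iteratedDeriv (i - j) (deriv X) c)))
        = (j:ℝ) * ((j-1).factorial : ℝ) * (a (j-1) c * X c) := by
      match j with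
      | 0 => simp
      | (m+1) =>
        rw [Finset.sum_eq_single m]
        · rw [show m+1-1 = m from rfl, Nat.sub_self, iteratedDeriv_zero,
            Nat.descFactorial_self,
            Nat.descFactorial_eq_zero_iff_lt.mpr (by omega : m < m + 1)]
          push_cast
          ring
        · intro i hi hne
          have hlt : i < m := by simp at hi; omega
          rw [show m+1-1 = m from rfl,
            Nat.descFactorial_eq_zero_iff_lt.mpr (by omega : i < m),
            Nat.descFactorial_eq_zero_iff_lt.mpr (by omega : i < m+1)]
          simp
        · intro h
          exact absurd (Finset.mem_range.mpr (by omega)) h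
    rw [etop, emid, e3]
    try ring
  have H : (∑ i ∈ Finset.range (j+1+1), b i c * iteratedDeriv i (fun y : ℝ => (y-c)^j) c)
      = X c * deriv (fun y => ∑ i ∈ Finset.range (j+1+1),
            a i y * iteratedDeriv i (fun y' : ℝ => (y'-c)^j) y) c
        + μ * deriv X c * (∑ i ∈ Finset.range (j+1+1),
            a i c * iteratedDeriv i (fun y' : ℝ => (y'-c)^j) c)
        - ∑ i ∈ Finset.range (j+1+1),
            a i c * iteratedDeriv i (lieDeriv lam X (fun y : ℝ => (y-c)^j)) c :=
    congrFun (hb _ hφ) c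
  rw [A1, A2, A3, A4] at H
  have hne : (j.factorial:ℝ) ≠ 0 := Nat.cast_ne_zero.mpr (Nat.factorial_ne_zero j)
  refine mul_left_cancel₀ hne ?_
  push_cast
  linear_combination H


/-- The first-order analogue of the principal symbol,
`V(A) = α·a_k' + β·a_{k−1}` with `α = λk + k(k−1)/2` and `β = μ − λ − k`, taking values
in densities of weight `μ − λ − k + 1`, is equivariant under the action of vector fields. -/
theorem V_equivariant (lam μ : ℝ) (k : ℕ) (hk : 1 ≤ k) (X : ℝ → ℝ) (a b : ℕ → ℝ → ℝ)
    (hX : ContDiff ℝ (⊤ : ℕ∞) X)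
    (ha : ∀ i, ContDiff ℝ (⊤ : ℕ∞) (a i)) (hbsmooth : ∀ i, ContDiff ℝ (⊤ : ℕ∞) (b i))
    (hb : ∀ φ : ℝ → ℝ, ContDiff ℝ (⊤ : ℕ∞) φ →
      (fun x => ∑ i ∈ Finset.range (k+1), b i x * iteratedDeriv i φ x)
        = fun x =>
            lieDeriv μ X (fun y => ∑ i ∈ Finset.range (k+1), a i y * iteratedDeriv i φ y) x
              - ∑ i ∈ Finset.range (k+1), a i x * iteratedDeriv i (lieDeriv lam X φ) x) :
    (fun x => (lam * k + k * (k - 1) / 2) * deriv (b k) x + (μ - lam - (k : ℝ)) * b (k-1) x)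
      = lieDeriv (μ - lam - (k : ℝ) + 1) X
          (fun x => (lam * k + k * (k - 1) / 2) * deriv (a k) x
            + (μ - lam - (k : ℝ)) * a (k-1) x) := by
  have hXs : ContDiff ℝ (⊤:ℕ∞) X := hX.of_le (by simp)
  have has : ∀ i, ContDiff ℝ (⊤:ℕ∞) (a i) := fun i => (ha i).of_le (by simp)
  have hXd : Differentiable ℝ X := hXs.differentiable (by simp)
  have hX1 : Differentiable ℝ (deriv X) := (smooth_deriv hXs).differentiable (by simp)
  have had : ∀ i, Differentiable ℝ (a i) := fun i => (has i).differentiable (by simp)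
  have ha1 : ∀ i, Differentiable ℝ (deriv (a i)) :=
    fun i => (smooth_deriv (has i)).differentiable (by simp)
  set β := μ - lam - (k : ℝ) with hβ
  have hbk : b k = fun x => X x * deriv (a k) x + β * (deriv X x * a k x) := by
    funext c
    rw [bk_formula lam μ k hk X a b hX ha hb c]
    ring
  have hbk1 : ∀ x, b (k-1) x = X x * deriv (a (k-1)) x + (β + 1) * deriv X x * a (k-1) x
      - (lam * (k:ℝ) + (k:ℝ) * ((k:ℝ) - 1) / 2) * a k x * deriv (deriv X) x := by
    intro c
    rw [bk1_formula lam μ k hk X a b hX ha hb c]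
    try ring
  funext x
  have hder : HasDerivAt (fun x => X x * deriv (a k) x + β * (deriv X x * a k x))
      (deriv X x * deriv (a k) x + X x * deriv (deriv (a k)) x
        + β * (deriv (deriv X) x * a k x + deriv X x * deriv (a k) x)) x := by
    exact (((hXd x).hasDerivAt.mul ((ha1 k) x).hasDerivAt).add
      ((((hX1 x).hasDerivAt.mul ((had k) x).hasDerivAt)).const_mul β))
  have hbkder : deriv (b k) x
      = deriv X x * deriv (a k) x + X x * deriv (deriv (a k)) x
        + β * (deriv (deriv X) x * a k x + deriv X x * deriv (a k) x) := by
    rw [hbk]; exact hder.deriv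
  have hinner : deriv (fun x => (lam * k + k * ((k:ℝ) - 1) / 2) * deriv (a k) x
      + β * a (k-1) x) x
      = (lam * k + k * ((k:ℝ) - 1) / 2) * deriv (deriv (a k)) x + β * deriv (a (k-1)) x := by
    exact ((((ha1 k) x).hasDerivAt.const_mul _).add
      (((had (k-1)) x).hasDerivAt.const_mul β)).deriv
  simp only [lieDeriv, hinner, hbkder, hbk1 x]
  try ring
end
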